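/- Let G be an infinite connected bounded degree graph with critical percolation probability p_c ∈ (0,1], and fix x ∈ V. If there exists a finite constant C₁ such that E_p|C(x)| ≤ C₁ (p_c − p)^{−1} for all p < p_c, then there exists a finite constant C₂ such that E_{p_c}|B_I(x,n)| ≤ C₂ n for all positive integers n. -/

import Mathlib

open MeasureTheory ProbabilityTheory ENNReal NNReal

/-- The subgraph of `G` consisting of edges open in the configuration `ω`. -/
def openSubgraph {V : Type*} (G : SimpleGraph V) (ω : Sym2 V → Bool) : SimpleGraph V :=
  G.deleteEdges {e | ω e = false}

/-- `x` is connected to `y` by an open path of at most `n` edges. -/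
def ConnWithin {V : Type*} (G : SimpleGraph V) (ω : Sym2 V → Bool) (x y : V) (n : ℕ) : Prop :=
  ∃ w : (openSubgraph G ω).Walk x y, w.length ≤ n

/-- The open cluster of `x`. -/
def cluster {V : Type*} (G : SimpleGraph V) (ω : Sym2 V → Bool) (x : V) : Set V :=
  {y | (openSubgraph G ω).Reachable x y}

/-- The intrinsic ball of radius `n` at `x`. -/
def intrinsicBall {V : Type*} (G : SimpleGraph V) (ω : Sym2 V → Bool) (x : V) (n : ℕ) : Set V :=
  {y | ConnWithin G ω x y n}

/-- `μ` is the product Bernoulli (bond percolation) measure with parameter `p`: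
coordinates are independent and each edge is open with probability `p`. -/
def IsBernoulliPercolation {V : Type*} (μ : Measure (Sym2 V → Bool)) (p : ℝ) : Prop :=
  IsProbabilityMeasure μ ∧
  iIndepFun (fun e (ω : Sym2 V → Bool) => ω e) μ ∧
  ∀ e : Sym2 V, μ {ω | ω e = true} = ENNReal.ofReal p


/-!
Sprinkling. Thinning every open edge independently with probability `q / p` turns `P_p` into
`P_q`. The event `x ↔^{≤n} y` is witnessed by the at most `n` open edges of a short open path,
and these all survive the thinning with probability at least `(q / p) ^ n`; hence
`(q / p) ^ n E_p|B_I(x,n)| ≤ E_q|B_I(x,n)| ≤ E_q|C(x)|`. Bounded degree makes the walk ball of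
radius `n` finite, so all events involved depend on finitely many edges and the coupling is a
finite computation. Taking `q = p_c (1 - 1/(2n))` gives `(q / p_c) ^ n ≥ 1/2` by Bernoulli's
inequality and `(p_c - q)⁻¹ = 2n / p_c`, whence `E_{p_c}|B_I(x,n)| ≤ 4 C₁ n / p_c`.
-/

open Finset

section Witness

variable {α : Type*}

def HasOpenWitness (E : Finset α) (n : ℕ) (A : Set (α → Bool)) : Prop :=
  ∀ ω ∈ A, ∃ S ⊆ E, #S ≤ n ∧ (∀ e ∈ S, ω e = true) ∧ ∀ ω', (∀ e ∈ S, ω' e = true) → ω' ∈ A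

variable {E : Finset α} {n : ℕ} {A : Set (α → Bool)}

lemma HasOpenWitness.restrict_preimage_image (hA : HasOpenWitness E n A) :
    E.restrict ⁻¹' (E.restrict '' A) = A := by
  refine subset_antisymm ?_ (Set.subset_preimage_image _ _)
  rintro ω ⟨ω', hω', hrestrict⟩
  obtain ⟨S, hSE, -, hS, hSA⟩ := hA ω' hω'
  refine hSA ω fun e he => ?_
  rw [← hS e he]
  exact (congrFun hrestrict ⟨e, hSE he⟩).symm

lemma HasOpenWitness.measurableSet (hA : HasOpenWitness E n A) : MeasurableSet A := by
  classical
  rw [← hA.restrict_preimage_image]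
  exact E.measurable_restrict (Set.toFinite _).measurableSet

lemma HasOpenWitness.image_restrict (hA : HasOpenWitness E n A) :
    HasOpenWitness (univ : Finset E) n (E.restrict '' A) := by
  classical
  rintro _ ⟨ω, hω, rfl⟩
  obtain ⟨S, hSE, hSn, hS, hSA⟩ := hA ω hω
  refine ⟨S.subtype (· ∈ E), subset_univ _,
    (card_subtype _ _).trans_le ((card_filter_le _ _).trans hSn),
    fun e he => hS e (mem_subtype.1 he), fun φ hφ => ?_⟩
  refine ⟨fun e => if he : e ∈ E then φ ⟨e, he⟩ else true, hSA _ fun e heS => ?_, ?_⟩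
  · rw [dif_pos (hSE heS)]
    exact hφ _ (mem_subtype.2 heS)
  · funext e
    simp

end Witness

noncomputable section Coupling

variable {ι : Type*} [Fintype ι]

def bernoulliWeight (p : ℝ≥0∞) (ψ : ι → Bool) : ℝ≥0∞ :=
  ∏ e, if ψ e then p else 1 - p

/-- Joint law of the states of one edge at parameters `p ≥ q` under the monotone coupling. -/
def couplingMass (p q : ℝ≥0∞) : Bool → Bool → ℝ≥0∞
  | true, true => q
  | true, false => p - q
  | false, true => 0
  | false, false => 1 - p

def couplingWeight (p q : ℝ≥0∞) (ψ φ : ι → Bool) : ℝ≥0∞ :=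
  ∏ e, couplingMass p q (ψ e) (φ e)

variable {p q : ℝ≥0∞}

lemma couplingMass_true_add_false (hqp : q ≤ p) (a : Bool) :
    couplingMass p q a true + couplingMass p q a false = if a then p else 1 - p := by
  cases a <;> simp [couplingMass, add_tsub_cancel_of_le hqp]

lemma couplingMass_add_false (hqp : q ≤ p) (hp : p ≤ 1) (b : Bool) :
    couplingMass p q true b + couplingMass p q false b = if b then q else 1 - q := by
  cases b <;> simp [couplingMass, add_comm (p - q), tsub_add_tsub_cancel hp hqp]

variable [DecidableEq ι]

lemma sum_couplingWeight_left (hqp : q ≤ p) (hp : p ≤ 1) (φ : ι → Bool) :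
    ∑ ψ, couplingWeight p q ψ φ = bernoulliWeight q φ := by
  unfold couplingWeight
  rw [← Fintype.prod_sum (fun e a => couplingMass p q a (φ e)), bernoulliWeight]
  exact prod_congr rfl fun e _ => by rw [Fintype.sum_bool, couplingMass_add_false hqp hp]

lemma sum_couplingWeight_of_open (hp0 : p ≠ 0) (hp : p ≠ ⊤) (hqp : q ≤ p) {ψ : ι → Bool}
    {S : Finset ι} (hS : ∀ e ∈ S, ψ e = true) :
    ∑ φ with ∀ e ∈ S, φ e = true, couplingWeight p q ψ φ =
      (q / p) ^ #S * bernoulliWeight p ψ := by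
  have hcyl : ({φ | ∀ e ∈ S, φ e = true} : Finset (ι → Bool)) =
      Fintype.piFinset fun e => if e ∈ S then {true} else univ := by
    ext φ
    simp only [mem_filter, mem_univ, true_and, Fintype.mem_piFinset]
    refine forall_congr' fun e => ?_
    split_ifs with he <;> simp [he]
  have hpow : (q / p) ^ #S = ∏ e, if e ∈ S then q / p else 1 := by
    rw [Fintype.prod_ite_mem, prod_const]
  unfold couplingWeight
  rw [hcyl, ← prod_univ_sum, hpow, bernoulliWeight, ← prod_mul_distrib]
  refine prod_congr rfl fun e _ => ?_
  by_cases he : e ∈ S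
  · simp [he, hS e he, couplingMass, ENNReal.div_mul_cancel hp0 hp]
  · rw [if_neg he, if_neg he, Fintype.sum_bool, couplingMass_true_add_false hqp, one_mul]

theorem pow_div_mul_sum_bernoulliWeight_le (hq0 : q ≠ 0) (hqp : q ≤ p) (hp : p ≤ 1) {n : ℕ}
    {A : Finset (ι → Bool)} (hA : HasOpenWitness univ n (A : Set (ι → Bool))) :
    (q / p) ^ n * ∑ ψ ∈ A, bernoulliWeight p ψ ≤ ∑ φ ∈ A, bernoulliWeight q φ := by
  have hp0 : p ≠ 0 := (pos_iff_ne_zero.2 hq0 |>.trans_le hqp).ne'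
  have hptop : p ≠ ⊤ := ne_top_of_le_ne_top ENNReal.one_ne_top hp
  have hqp1 : q / p ≤ 1 := ENNReal.div_le_of_le_mul (by rwa [one_mul])
  calc (q / p) ^ n * ∑ ψ ∈ A, bernoulliWeight p ψ
      = ∑ ψ ∈ A, (q / p) ^ n * bernoulliWeight p ψ := mul_sum _ _ _
    _ ≤ ∑ ψ ∈ A, ∑ φ ∈ A, couplingWeight p q ψ φ := by
        refine sum_le_sum fun ψ hψ => ?_
        obtain ⟨S, -, hSn, hSψ, hSA⟩ := hA ψ hψ
        calc (q / p) ^ n * bernoulliWeight p ψ ≤ (q / p) ^ #S * bernoulliWeight p ψ :=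
              mul_le_mul_left (pow_le_pow_of_le_one zero_le hqp1 hSn) _
          _ = ∑ φ with ∀ e ∈ S, φ e = true, couplingWeight p q ψ φ :=
              (sum_couplingWeight_of_open hp0 hptop hqp hSψ).symm
          _ ≤ ∑ φ ∈ A, couplingWeight p q ψ φ :=
              sum_le_sum_of_subset fun φ hφ => hSA φ (mem_filter.1 hφ).2
    _ ≤ ∑ ψ, ∑ φ ∈ A, couplingWeight p q ψ φ := sum_le_sum_of_subset (subset_univ A)
    _ = ∑ φ ∈ A, bernoulliWeight q φ := by
        rw [sum_comm]
        exact sum_congr rfl fun φ _ => sum_couplingWeight_left hqp hp φ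

end Coupling

section Percolation

variable {V : Type*} {μ μp μq : Measure (Sym2 V → Bool)} {p q : ℝ}

lemma IsBernoulliPercolation.measure_edge_eq (hμ : IsBernoulliPercolation μ p) (e : Sym2 V)
    (b : Bool) : μ {ω | ω e = b} = if b then ENNReal.ofReal p else 1 - ENNReal.ofReal p := by
  have := hμ.1
  cases b
  · have hopen : MeasurableSet ((fun ω : Sym2 V → Bool => ω e) ⁻¹' {true}) :=
      measurable_pi_apply e (measurableSet_singleton true)
    have hcompl : {ω : Sym2 V → Bool | ω e = false} = ((fun ω => ω e) ⁻¹' {true})ᶜ := by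
      ext ω; simp
    rw [hcompl, prob_compl_eq_one_sub hopen]
    exact congrArg (1 - ·) (hμ.2.2 e)
  · exact hμ.2.2 e

lemma IsBernoulliPercolation.measure_restrict_preimage (hμ : IsBernoulliPercolation μ p)
    (E : Finset (Sym2 V)) (B : Finset (E → Bool)) :
    μ (E.restrict ⁻¹' B) = ∑ χ ∈ B, bernoulliWeight (ENNReal.ofReal p) χ := by
  have := hμ.1
  have hlaw : μ.map E.restrict = Measure.pi fun e : E => μ.map fun ω => ω e :=
    (hμ.2.1.restrict E).map_fun_eq_pi_map fun e => (measurable_pi_apply _).aemeasurable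
  rw [← Measure.map_apply (E.measurable_restrict) B.finite_toSet.measurableSet, hlaw,
    ← sum_measure_singleton]
  refine sum_congr rfl fun χ _ => ?_
  rw [Measure.pi_singleton, bernoulliWeight]
  refine prod_congr rfl fun e _ => ?_
  rw [Measure.map_apply (measurable_pi_apply _) (measurableSet_singleton _)]
  exact hμ.measure_edge_eq e (χ e)

theorem HasOpenWitness.pow_div_mul_measure_le {E : Finset (Sym2 V)} {n : ℕ}
    {A : Set (Sym2 V → Bool)} (hA : HasOpenWitness E n A)
    (hμp : IsBernoulliPercolation μp p) (hμq : IsBernoulliPercolation μq q) (hq0 : 0 < q)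
    (hqp : q ≤ p) (hp1 : p ≤ 1) :
    (ENNReal.ofReal q / ENNReal.ofReal p) ^ n * μp A ≤ μq A := by
  classical
  rw [← hA.restrict_preimage_image, ← Set.coe_toFinset (E.restrict '' A),
    hμp.measure_restrict_preimage, hμq.measure_restrict_preimage]
  refine pow_div_mul_sum_bernoulliWeight_le (ENNReal.ofReal_pos.2 hq0).ne'
    (ENNReal.ofReal_le_ofReal hqp) (ENNReal.ofReal_le_one.2 hp1) ?_
  simpa only [Set.coe_toFinset] using hA.image_restrict

end Percolation

lemma lintegral_encard_eq_sum_measure {Ω α : Type*} [MeasurableSpace Ω] (μ : Measure Ω)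
    {R : Ω → Set α} (F : Finset α) (hRF : ∀ ω, R ω ⊆ F)
    (hR : ∀ y, MeasurableSet {ω | y ∈ R ω}) :
    ∫⁻ ω, ((R ω).encard : ℝ≥0∞) ∂μ = ∑ y ∈ F, μ {ω | y ∈ R ω} := by
  classical
  have hcount (ω : Ω) :
      ((R ω).encard : ℝ≥0∞) = ∑ y ∈ F, {ω | y ∈ R ω}.indicator 1 ω := by
    have hR : R ω = ↑(F.filter (· ∈ R ω)) := by
      ext y
      simpa using fun hy => hRF ω hy
    rw [hR, Set.encard_coe_eq_coe_finsetCard]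
    simp [Set.indicator_apply, sum_boole]
  rw [lintegral_congr hcount, lintegral_finsetSum _ fun y _ => measurable_one.indicator (hR y)]
  exact sum_congr rfl fun y _ => lintegral_indicator_one (hR y)

namespace SimpleGraph

variable {V : Type*} (G : SimpleGraph V)

def walkBall (x : V) (n : ℕ) : Set V := {y | ∃ w : G.Walk x y, w.length ≤ n}

variable {G}

lemma walkBall_succ_subset (x : V) (n : ℕ) :
    G.walkBall x (n + 1) ⊆ insert x (⋃ z ∈ G.neighborSet x, G.walkBall z n) := by
  rintro y ⟨_ | ⟨hxz, w⟩, hw⟩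
  · exact Set.mem_insert _ _
  · exact Set.mem_insert_of_mem _ (Set.mem_biUnion hxz ⟨w, by simpa using hw⟩)

lemma walkBall_finite (hG : ∀ v, (G.neighborSet v).Finite) (x : V) (n : ℕ) :
    (G.walkBall x n).Finite := by
  induction n generalizing x with
  | zero =>
    refine (Set.finite_singleton x).subset ?_
    rintro y ⟨w, hw⟩
    exact (w.eq_of_length_eq_zero (Nat.le_zero.1 hw)).symm
  | succ n ih =>
    exact (((hG x).biUnion fun z _ => ih z).insert x).subset (walkBall_succ_subset x n)

lemma walkBall_mono {H : SimpleGraph V} (h : G ≤ H) (x : V) (n : ℕ) :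
    G.walkBall x n ⊆ H.walkBall x n := fun _ ⟨w, hw⟩ => ⟨w.mapLe h, by simpa using hw⟩

lemma Walk.mem_walkBall_of_mem_support {x y v : V} (w : G.Walk x y) {n : ℕ}
    (hw : w.length ≤ n) (hv : v ∈ w.support) : v ∈ G.walkBall x n := by
  classical
  exact ⟨w.takeUntil v hv, (w.length_takeUntil_le_length hv).trans hw⟩

end SimpleGraph

section IntrinsicBall

variable {V : Type*} {G : SimpleGraph V} {ω : Sym2 V → Bool} {x : V} {n : ℕ}

@[simp]
lemma mem_edgeSet_openSubgraph {e : Sym2 V} :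
    e ∈ (openSubgraph G ω).edgeSet ↔ e ∈ G.edgeSet ∧ ω e = true := by
  simp [openSubgraph]

lemma openSubgraph_le : openSubgraph G ω ≤ G := G.deleteEdges_le _

lemma intrinsicBall_subset_walkBall : intrinsicBall G ω x n ⊆ G.walkBall x n :=
  SimpleGraph.walkBall_mono openSubgraph_le x n

lemma intrinsicBall_subset_cluster : intrinsicBall G ω x n ⊆ cluster G ω x :=
  fun _ ⟨w, _⟩ => ⟨w⟩

lemma hasOpenWitness_connWithin (hfin : (G.walkBall x n).Finite) (y : V) :
    HasOpenWitness hfin.toFinset.sym2 n {ω | ConnWithin G ω x y n} := by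
  classical
  rintro ω ⟨w, hw⟩
  have hopen : ∀ e ∈ w.edges, e ∈ G.edgeSet ∧ ω e = true :=
    fun e he => mem_edgeSet_openSubgraph.1 (w.edges_subset_edgeSet he)
  refine ⟨w.edges.toFinset, fun e he => ?_, (List.toFinset_card_le _).trans (by simpa using hw),
    fun e he => (hopen e (List.mem_toFinset.1 he)).2, fun ω' hω' => ?_⟩
  · refine mem_sym2_iff.2 fun v hv => hfin.mem_toFinset.2 ?_
    refine intrinsicBall_subset_walkBall (ω := ω) ?_
    exact w.mem_walkBall_of_mem_support hw (w.mem_support_of_mem_edges (List.mem_toFinset.1 he) hv)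
  · refine ⟨w.transfer _ fun e he => ?_, by simpa using hw⟩
    exact mem_edgeSet_openSubgraph.2 ⟨(hopen e he).1, hω' e (List.mem_toFinset.2 he)⟩

theorem pow_div_mul_lintegral_intrinsicBall_le {μp μq : Measure (Sym2 V → Bool)} {p q : ℝ}
    (hfin : (G.walkBall x n).Finite) (hμp : IsBernoulliPercolation μp p)
    (hμq : IsBernoulliPercolation μq q) (hq0 : 0 < q) (hqp : q ≤ p) (hp1 : p ≤ 1) :
    (ENNReal.ofReal q / ENNReal.ofReal p) ^ n *
        ∫⁻ ω, ((intrinsicBall G ω x n).encard : ℝ≥0∞) ∂μp ≤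
      ∫⁻ ω, ((intrinsicBall G ω x n).encard : ℝ≥0∞) ∂μq := by
  have hW := hasOpenWitness_connWithin hfin
  have hsum (μ : Measure (Sym2 V → Bool)) :=
    lintegral_encard_eq_sum_measure μ (R := fun ω => intrinsicBall G ω x n) hfin.toFinset
      (fun ω => by simpa using intrinsicBall_subset_walkBall) fun y => (hW y).measurableSet
  rw [hsum, hsum, mul_sum]
  exact sum_le_sum fun y _ => (hW y).pow_div_mul_measure_le hμp hμq hq0 hqp hp1

end IntrinsicBall

lemma one_le_two_mul_one_sub_inv_two_mul_pow (n : ℕ) : 1 ≤ 2 * (1 - 1 / (2 * n : ℝ)) ^ n := by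
  rcases n.eq_zero_or_pos with rfl | hn
  · norm_num
  have hn' : (1 : ℝ) ≤ n := by exact_mod_cast hn
  have hsmall : 1 / (2 * n : ℝ) ≤ 1 := (div_le_one (by positivity)).2 (by linarith)
  have hbern := one_add_mul_le_pow (a := -(1 / (2 * n : ℝ))) (by linarith) n
  have hhalf : 1 + n * -(1 / (2 * n : ℝ)) = 1 / 2 := by field_simp; norm_num
  rw [hhalf, ← sub_eq_add_neg] at hbern
  linarith

lemma two_mul_mul_inv_ofReal_div (C : ℝ≥0) {p : ℝ} (hp : 0 < p) {n : ℕ} (hn : 0 < n) :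
    2 * (C * (ENNReal.ofReal (p / (2 * n)))⁻¹) =
      ((4 * C / p.toNNReal : ℝ≥0) : ℝ≥0∞) * n := by
  have hn' : (0 : ℝ) < 2 * n := by positivity
  rw [ENNReal.ofReal_div_of_pos hn', ENNReal.ofReal_mul zero_le_two, ENNReal.ofReal_natCast,
    ENNReal.ofReal_ofNat, ENNReal.inv_div (by simp) (by simp [hp]),
    ENNReal.coe_div (by simp [hp]), ENNReal.ofReal]
  simp only [div_eq_mul_inv]
  push_cast
  ring

theorem stmt4_general {V : Type*} (G : SimpleGraph V)
    (D : ℕ) (hD : ∀ v : V, (G.neighborSet v).encard ≤ D)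
    (x : V)
    (μ : ℝ → Measure (Sym2 V → Bool))
    (hμ : ∀ q : ℝ, 0 ≤ q → q ≤ 1 → IsBernoulliPercolation (μ q) q)
    (p_c : ℝ) (hpc0 : 0 < p_c) (hpc1 : p_c ≤ 1)
    (C₁ : ℝ≥0)
    (hC₁ : ∀ q : ℝ, 0 ≤ q → q < p_c →
      ∫⁻ ω, ((cluster G ω x).encard : ℝ≥0∞) ∂(μ q)
        ≤ (C₁ : ℝ≥0∞) * (ENNReal.ofReal (p_c - q))⁻¹) :
    ∃ C₂ : ℝ≥0, ∀ n : ℕ, 0 < n →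
      ∫⁻ ω, ((intrinsicBall G ω x n).encard : ℝ≥0∞) ∂(μ p_c) ≤ (C₂ : ℝ≥0∞) * n := by
  refine ⟨4 * C₁ / p_c.toNNReal, fun n hn => ?_⟩
  have hε : 0 < 1 / (2 * n : ℝ) ∧ 1 / (2 * n : ℝ) < 1 :=
    ⟨by positivity, (div_lt_one (by positivity)).2 (by norm_cast; omega)⟩
  set q := p_c * (1 - 1 / (2 * n)) with hq
  have hq0 : 0 < q := mul_pos hpc0 (by linarith)
  have hqp : q < p_c := mul_lt_of_lt_one_right hpc0 (by linarith)
  have hratio : 1 ≤ 2 * (ENNReal.ofReal q / ENNReal.ofReal p_c) ^ n := by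
    rw [← ENNReal.ofReal_div_of_pos hpc0, hq, mul_div_cancel_left₀ _ hpc0.ne',
      ← ENNReal.ofReal_pow (by linarith), ← ENNReal.ofReal_ofNat 2,
      ← ENNReal.ofReal_mul zero_le_two]
    exact ENNReal.one_le_ofReal.2 (one_le_two_mul_one_sub_inv_two_mul_pow n)
  have hfin := G.walkBall_finite (fun v => Set.finite_of_encard_le_coe (hD v)) x n
  have hsprinkle := pow_div_mul_lintegral_intrinsicBall_le hfin (hμ p_c hpc0.le hpc1)
    (hμ q hq0.le (hqp.le.trans hpc1)) hq0 hqp.le hpc1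
  have hcluster : ∫⁻ ω, ((intrinsicBall G ω x n).encard : ℝ≥0∞) ∂(μ q) ≤
      ∫⁻ ω, ((cluster G ω x).encard : ℝ≥0∞) ∂(μ q) :=
    lintegral_mono fun ω => by gcongr; exact intrinsicBall_subset_cluster
  calc _ ≤ 2 * ((ENNReal.ofReal q / ENNReal.ofReal p_c) ^ n *
        ∫⁻ ω, ((intrinsicBall G ω x n).encard : ℝ≥0∞) ∂(μ p_c)) := by
        rw [← mul_assoc]; exact le_mul_of_one_le_left zero_le hratio
    _ ≤ 2 * (C₁ * (ENNReal.ofReal (p_c - q))⁻¹) := by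
        gcongr 2 * ?_; exact hsprinkle.trans (hcluster.trans (hC₁ q hq0.le hqp))
    _ = _ := by
        rw [show p_c - q = p_c / (2 * n) by ring]; exact two_mul_mul_inv_ofReal_div C₁ hpc0 hn

/-- Main theorem: if `E_p|C(x)| ≤ C₁ (p_c - p)⁻¹` for all `p < p_c`, then
`E_{p_c}|B_I(x,n)| ≤ C₂ n`. -/
theorem stmt4 {V : Type*} [Infinite V] (G : SimpleGraph V) (hconn : G.Connected)
    (D : ℕ) (hD : ∀ v : V, (G.neighborSet v).encard ≤ D)
    (x : V)
    (μ : ℝ → Measure (Sym2 V → Bool))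
    (hμ : ∀ q : ℝ, 0 ≤ q → q ≤ 1 → IsBernoulliPercolation (μ q) q)
    (p_c : ℝ) (hpc0 : 0 < p_c) (hpc1 : p_c ≤ 1)
    (hpcdef : p_c = sInf {q : ℝ | 0 ≤ q ∧ q ≤ 1 ∧ 0 < μ q {ω | (cluster G ω x).Infinite}})
    (C₁ : ℝ≥0)
    (hC₁ : ∀ q : ℝ, 0 ≤ q → q < p_c →
      ∫⁻ ω, ((cluster G ω x).encard : ℝ≥0∞) ∂(μ q)
        ≤ (C₁ : ℝ≥0∞) * (ENNReal.ofReal (p_c - q))⁻¹) :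
    ∃ C₂ : ℝ≥0, ∀ n : ℕ, 0 < n →
      ∫⁻ ω, ((intrinsicBall G ω x n).encard : ℝ≥0∞) ∂(μ p_c) ≤ (C₂ : ℝ≥0∞) * n :=
  stmt4_general G D hD x μ hμ p_c hpc0 hpc1 C₁ hC₁
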